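/- arXiv:2601.19453 — 3 statements merged into one kernel-verified Lean document; each statement's English description precedes it below -/
import Mathlib

section
/- In the greedy stack algorithm run on a hidden sorted sequence with witness subsequence x_{i_1}, ..., x_{i_k} (listing the k distinct values in increasing order), for every j, after the element x_{i_j} has been processed, the bottom j elements of the stack are exactly the j smallest distinct values of X in increasing order, and these j elements are never removed from the stack afterwards. -/
noncomputable def greedyStep (s : List ℝ) (x : ℝ) : List ℝ :=
  if x ∈ s then s else x :: s.dropWhile (fun y => decide (x ≤ y))

/-- The greedy stack algorithm run on a sequence; the head of the resulting
list is the top of the stack. -/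
noncomputable def greedy (X : List ℝ) : List ℝ := X.foldl greedyStep []

def IsSortedWitness (Q X : List ℝ) : Prop :=
  Q.Sublist X ∧ Q.Pairwise (· < ·) ∧ Q.toFinset = X.toFinset

/-!
The stack is strictly decreasing from top to bottom and holds only values already read.
A value `y` can only be popped by a smaller value `x` that is not on the stack. If `y` belongs
to an increasing subsequence `L` of the input that contains every smaller input value, then
every such `x` lies in `L`, was pushed before `y` and is still on the stack, so it is
discarded. For `L` the first `j` witness values, the stack read bottom-up is then a strictly
increasing list of values of `X` containing the `j` smallest ones, so it starts with them.
-/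

lemma greedy_append_singleton (P : List ℝ) (x : ℝ) :
    greedy (P ++ [x]) = greedyStep (greedy P) x := by
  simp only [greedy, List.foldl_append, List.foldl_cons, List.foldl_nil]

lemma mem_greedyStep_self (s : List ℝ) (x : ℝ) : x ∈ greedyStep s x := by
  unfold greedyStep
  split_ifs with hx
  · exact hx
  · exact List.mem_cons_self

lemma mem_greedyStep_of_mem {s : List ℝ} {x y : ℝ} (hy : y ∈ s) (hxy : x ∈ s ∨ y < x) :
    y ∈ greedyStep s x := by
  unfold greedyStep
  split_ifs with hx
  · exact hy
  · refine List.mem_cons_of_mem _ ?_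
    let p : ℝ → Bool := fun z => decide (x ≤ z)
    rw [← List.takeWhile_append_dropWhile (p := p) (l := s)] at hy
    rcases List.mem_append.mp hy with hy | hy
    · exact absurd (of_decide_eq_true (List.mem_takeWhile_imp (p := p) hy))
        (hxy.resolve_left hx).not_ge
    · exact hy

lemma greedyStep_subset (s : List ℝ) (x : ℝ) : greedyStep s x ⊆ x :: s := by
  unfold greedyStep
  split_ifs
  · exact List.subset_cons_self _ _
  · exact List.cons_subset_cons _ (List.dropWhile_sublist _).subset

lemma lt_of_mem_dropWhile {s : List ℝ} {x y : ℝ} (hs : s.Pairwise (· > ·))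
    (hy : y ∈ s.dropWhile (fun z => decide (x ≤ z))) : y < x := by
  induction s with
  | nil => simp at hy
  | cons a t ih =>
    rw [List.pairwise_cons] at hs
    by_cases hxa : x ≤ a
    · simp only [List.dropWhile_cons, hxa, decide_true, if_true] at hy
      exact ih hs.2 hy
    · simp only [List.dropWhile_cons, hxa, decide_false, Bool.false_eq_true, if_false,
        List.mem_cons] at hy
      rcases hy with rfl | hy
      · exact lt_of_not_ge hxa
      · exact (hs.1 y hy).trans (lt_of_not_ge hxa)

lemma greedyStep_pairwise {s : List ℝ} (hs : s.Pairwise (· > ·)) (x : ℝ) :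
    (greedyStep s x).Pairwise (· > ·) := by
  unfold greedyStep
  split_ifs
  · exact hs
  · exact List.pairwise_cons.mpr
      ⟨fun _ hy => lt_of_mem_dropWhile hs hy, hs.sublist (List.dropWhile_sublist _)⟩

lemma greedy_pairwise (P : List ℝ) : (greedy P).Pairwise (· > ·) := by
  induction P using List.reverseRecOn with
  | nil => exact List.Pairwise.nil
  | append_singleton P x ih =>
    rw [greedy_append_singleton]
    exact greedyStep_pairwise ih x

lemma greedy_subset (P : List ℝ) : greedy P ⊆ P := by
  induction P using List.reverseRecOn with
  | nil => exact List.nil_subset _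
  | append_singleton P x ih =>
    rw [greedy_append_singleton]
    intro y hy
    rcases List.mem_cons.mp (greedyStep_subset _ x hy) with rfl | hy
    · exact List.mem_append_right _ (List.mem_singleton_self y)
    · exact List.mem_append_left _ (ih hy)

theorem subset_greedy_of_sublist {L P : List ℝ} (hL : L.Pairwise (· < ·)) (hLP : L.Sublist P)
    (hdown : ∀ x ∈ P, ∀ y ∈ L, x < y → x ∈ L) : L ⊆ greedy P := by
  induction P using List.reverseRecOn generalizing L with
  | nil => rw [List.sublist_nil.mp hLP]; exact List.nil_subset _
  | append_singleton P x ih =>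
    rw [greedy_append_singleton]
    have hdownP : ∀ x' ∈ P, ∀ y ∈ L, x' < y → x' ∈ L :=
      fun x' hx' => hdown x' (List.mem_append_left _ hx')
    obtain ⟨L₁, L₂, rfl, hL₁, hL₂⟩ := List.sublist_append_iff.mp hLP
    rcases List.sublist_singleton.mp hL₂ with rfl | rfl
    · rw [List.append_nil] at hL hdown hdownP ⊢
      have hkept := ih hL hL₁ hdownP
      intro y hy
      refine mem_greedyStep_of_mem (hkept hy) ?_
      rcases lt_trichotomy x y with hxy | rfl | hxy
      · have hxP : x ∈ P ++ [x] := List.mem_append_right _ (List.mem_singleton_self x)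
        exact Or.inl (hkept (hdown x hxP y hy hxy))
      · exact Or.inl (hkept hy)
      · exact Or.inr hxy
    · have hlt : ∀ y ∈ L₁, y < x :=
        fun y hy => (List.pairwise_append.mp hL).2.2 y hy x (List.mem_singleton_self x)
      have hkept : L₁ ⊆ greedy P := by
        refine ih (hL.sublist (List.sublist_append_left _ _)) hL₁ fun x' hx' y hy hxy => ?_
        rcases List.mem_append.mp (hdownP x' hx' y (List.mem_append_left _ hy) hxy) with h | h
        · exact h
        · rw [List.mem_singleton.mp h] at hxy
          exact absurd (hlt y hy) hxy.not_gt
      intro y hy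
      rcases List.mem_append.mp hy with hy | hy
      · exact mem_greedyStep_of_mem (hkept hy) (Or.inr (hlt y hy))
      · rw [List.mem_singleton.mp hy]
        exact mem_greedyStep_self _ _

theorem List.mem_take_of_lt_of_pairwise {α : Type*} [Preorder α] {l : List α}
    (hl : l.Pairwise (· < ·)) {j : ℕ} {x y : α} (hx : x ∈ l) (hy : y ∈ l.take j)
    (hxy : x < y) : x ∈ l.take j := by
  rw [← List.take_append_drop j l] at hx hl
  rcases List.mem_append.mp hx with hx | hx
  · exact hx
  · exact absurd ((List.pairwise_append.mp hl).2.2 y hy x hx) hxy.not_gt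

theorem List.take_eq_take_of_pairwise_of_subset {α : Type*} [LinearOrder α]
    {l₁ l₂ : List α} (h₁ : l₁.Pairwise (· < ·)) (h₂ : l₂.Pairwise (· < ·)) (hsub : l₁ ⊆ l₂)
    {j : ℕ} (htake : l₂.take j ⊆ l₁) : l₁.take j = l₂.take j := by
  induction l₂ generalizing l₁ j with
  | nil => rw [List.subset_nil.mp hsub]
  | cons b l₂ ih =>
    cases j with
    | zero => simp
    | succ j =>
      cases l₁ with
      | nil => exact absurd (htake (List.mem_cons_self)) List.not_mem_nil
      | cons a l₁ =>
        rw [List.pairwise_cons] at h₁ h₂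
        obtain rfl : a = b := by
          rcases List.mem_cons.mp (hsub List.mem_cons_self) with ha | ha
          · exact ha
          rcases List.mem_cons.mp (htake List.mem_cons_self) with hb | hb
          · exact hb.symm
          exact absurd ((h₂.1 a ha).trans (h₁.1 b hb)) (lt_irrefl _)
        rw [List.take_succ_cons, List.take_succ_cons]
        congr 1
        refine ih h₁.2 h₂.2 (fun y hy => ?_) (fun y hy => ?_)
        · rcases List.mem_cons.mp (hsub (List.mem_cons_of_mem _ hy)) with rfl | h
          · exact absurd (h₁.1 _ hy) (lt_irrefl _)
          · exact h
        · rcases List.mem_cons.mp (htake (List.mem_cons_of_mem _ hy)) with rfl | h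
          · exact absurd (h₂.1 _ (List.take_subset _ _ hy)) (lt_irrefl _)
          · exact h

/-- Run the greedy stack algorithm on a hidden sorted sequence `X` with witness
`Q` (listing the distinct values in increasing order).  For every `j`, and every
prefix `X.take m` of the sequence in which the first `j` witness elements have
already been processed (i.e. `Q.take j` is a subsequence of `X.take m`), the
bottom `j` elements of the current stack are exactly the `j` smallest distinct
values of `X` in increasing order.  Since this holds for *every* such prefix
length `m`, these `j` elements are never removed afterwards. -/
theorem stmt_3 (X Q : List ℝ) (hQ : IsSortedWitness Q X) :
    ∀ j m : ℕ, (Q.take j).Sublist (X.take m) →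
      (greedy (X.take m)).reverse.take j
        = (X.toFinset.sort (· ≤ ·)).take j := by
  obtain ⟨-, hQs, hQX⟩ := hQ
  have hsort : X.toFinset.sort (· ≤ ·) = Q := by
    rw [← hQX]
    exact (List.toFinset_sort _ hQs.nodup).mpr (hQs.imp le_of_lt)
  intro j m hsub
  have hPQ : X.take m ⊆ Q := fun y hy => by
    rw [← List.mem_toFinset, hQX, List.mem_toFinset]
    exact List.take_subset _ _ hy
  have hkept : Q.take j ⊆ greedy (X.take m) :=
    subset_greedy_of_sublist (hQs.sublist (List.take_sublist _ _)) hsub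
      fun x hx y hy hxy => List.mem_take_of_lt_of_pairwise hQs (hPQ hx) hy hxy
  rw [hsort]
  exact List.take_eq_take_of_pairwise_of_subset (List.pairwise_reverse.mpr (greedy_pairwise _))
    hQs (List.reverse_subset.mpr (List.Subset.trans (greedy_subset _) hPQ))
    (List.Subset.trans hkept fun _ => List.mem_reverse.mpr)
end

section
/- Let Ξ be a sorting-supersequence of a family R of intervals, formed by concatenating sequences Ξ_1, ..., Ξ_k where Ξ_i is a universal word on the intervals of a set S_i', such that: the sets W_i (unions of clusters) are ordered left to right, every point of any realization lies in exactly one group P_i (points in W_i but not W_{i-1}), and all intervals whose points can land in W_i \ W_{i-1} belong to S_i'. Then for any realization P of R, the sorted order of P is a subsequence of the realized sequence of Ξ. -/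
/-!
Split the realized points into their groups and sort each group. Since the groups lie left to
right, the concatenation of the sorted groups is the sorted order of the whole realization. Each
sorted group is a repetition-free list of intervals of `S'ⱼ`; completing it to an ordering of all
of `S'ⱼ` shows that it is a subsequence of the universal word `Ξⱼ`, and concatenating these
embeddings gives the claim.
-/

open List

theorem List.flatten_ofFn_sublist_flatten_ofFn {α : Type*} :
    ∀ {m : ℕ} {f g : Fin m → List α}, (∀ j, f j <+ g j) → (ofFn f).flatten <+ (ofFn g).flatten
  | 0, _, _, _ => by simp
  | _ + 1, _, _, h => by
    simpa only [ofFn_succ, flatten_cons] using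
      (h 0).append (flatten_ofFn_sublist_flatten_ofFn fun j => h j.succ)

def IsUniversalWord {α : Type*} [DecidableEq α] (S : Finset α) (w : List α) : Prop :=
  ∀ l : List α, l.Nodup → l.toFinset = S → l <+ w

theorem IsUniversalWord.sublist_of_subset {α : Type*} [DecidableEq α] {S : Finset α}
    {w l : List α} (hw : IsUniversalWord S w) (hl : l.Nodup) (hlS : ∀ a ∈ l, a ∈ S) :
    l <+ w := by
  set rest := S.toList.filter (· ∉ l)
  have hnodup : (l ++ rest).Nodup :=
    nodup_append.2 ⟨hl, S.nodup_toList.filter _, fun a ha b hb hab => by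
      simp_all [rest]⟩
  have hfinset : (l ++ rest).toFinset = S := by
    ext a
    by_cases ha : a ∈ l <;> simp [rest, ha, hlS]
  exact (sublist_append_left l rest).trans (hw _ hnodup hfinset)

section SortedBlock

variable {α β : Type*} [LinearOrder β] {k : ℕ} (p : α → β) (g : α → Fin k) (l : List α)

def sortedBlock (j : Fin k) : List α :=
  (l.filter (g · = j)).mergeSort (fun a b => p a ≤ p b)

variable {p g l}

theorem mem_sortedBlock {j : Fin k} {a : α} : a ∈ sortedBlock p g l j ↔ a ∈ l ∧ g a = j := by
  simp [sortedBlock]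

theorem nodup_sortedBlock (hl : l.Nodup) (j : Fin k) : (sortedBlock p g l j).Nodup :=
  (mergeSort_perm _ _).nodup_iff.2 (hl.filter _)

theorem flatten_ofFn_sortedBlock_perm [DecidableEq α] :
    (ofFn (sortedBlock p g l)).flatten ~ l := by
  refine perm_iff_count.2 fun a => ?_
  have hcount : ∀ j, count a (sortedBlock p g l j) = if g a = j then count a l else 0 := by
    intro j
    rw [sortedBlock, (mergeSort_perm _ _).count_eq]
    split_ifs with h
    · exact count_filter (by simpa using h)
    · exact count_eq_zero.2 fun ha => h (of_decide_eq_true (mem_filter.1 ha).2)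
  simp [count_flatten, sum_ofFn, hcount]

theorem pairwise_sortedBlock (j : Fin k) : (sortedBlock p g l j).Pairwise (p · ≤ p ·) := by
  simpa [sortedBlock] using pairwise_mergeSort (le := fun a b => decide (p a ≤ p b))
    (fun _ _ _ hab hbc => by simp_all only [decide_eq_true_eq]; exact hab.trans hbc)
    (fun a b => by simpa using le_total (p a) (p b)) _

theorem pairwise_map_flatten_ofFn_sortedBlock (hmono : ∀ a b, g a < g b → p a < p b) :
    ((ofFn (sortedBlock p g l)).flatten.map p).Pairwise (· ≤ ·) := by
  rw [pairwise_map, pairwise_flatten, pairwise_ofFn]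
  refine ⟨?_, fun i j hij a ha b hb => (hmono a b ?_).le⟩
  · simpa only [mem_ofFn, forall_exists_index, forall_apply_eq_imp_iff] using
      pairwise_sortedBlock
  · rwa [(mem_sortedBlock.1 ha).2, (mem_sortedBlock.1 hb).2]

end SortedBlock

theorem stmt_14_general (n k : ℕ) (Ξ : Fin k → List (Fin n))
    (S' : Fin k → Finset (Fin n))
    (huniv : ∀ j : Fin k, ∀ l : List (Fin n),
      l.Nodup → l.toFinset = S' j → l.Sublist (Ξ j))
    (p : Fin n → ℝ)
    (grp : Fin n → Fin k)
    (hmono : ∀ a b : Fin n, grp a < grp b → p a < p b)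
    (hgrp : ∀ a : Fin n, a ∈ S' (grp a)) :
    ∃ L : List ℝ, L.Perm (List.ofFn p) ∧ L.Pairwise (· ≤ ·) ∧
      L.Sublist (((List.ofFn Ξ).flatten).map p) := by
  refine ⟨(ofFn (sortedBlock p grp (finRange n))).flatten.map p, ?_,
    pairwise_map_flatten_ofFn_sortedBlock (l := finRange n) hmono, ?_⟩
  · rw [ofFn_eq_map (f := p)]
    exact flatten_ofFn_sortedBlock_perm.map p
  · refine (flatten_ofFn_sublist_flatten_ofFn fun j => ?_).map p
    refine IsUniversalWord.sublist_of_subset (huniv j) (nodup_sortedBlock (nodup_finRange n) j)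
      fun a ha => ?_
    exact (mem_sortedBlock.1 ha).2 ▸ hgrp a

/-- Concatenating universal words over the clusters yields a
sorting-supersequence.  Setting: `R` is a family of `n` intervals (regions),
`Ξ j` is a universal word over the index set `S' j` (it contains every linear
ordering of `S' j` as a subsequence), and the concatenation `Ξ₁ … Ξ_k` is
considered.  For any realization `p` of `R` (one point per region) admitting a
grouping `grp` of the regions into the windows such that (i) points of earlier
groups lie strictly to the left of points of later groups, and (ii) every
region whose point lands in group `j` belongs to `S' j`, the sorted order of
the realized points is a subsequence of the realized concatenated sequence. -/
theorem stmt_14 (n k : ℕ) (R : Fin n → Set ℝ) (Ξ : Fin k → List (Fin n))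
    (S' : Fin k → Finset (Fin n))
    (huniv : ∀ j : Fin k, ∀ l : List (Fin n),
      l.Nodup → l.toFinset = S' j → l.Sublist (Ξ j))
    (p : Fin n → ℝ) (hp : ∀ i, p i ∈ R i)
    (grp : Fin n → Fin k)
    (hmono : ∀ a b : Fin n, grp a < grp b → p a < p b)
    (hgrp : ∀ a : Fin n, a ∈ S' (grp a)) :
    ∃ L : List ℝ, L.Perm (List.ofFn p) ∧ L.Pairwise (· ≤ ·) ∧
      L.Sublist (((List.ofFn Ξ).flatten).map p) :=
  stmt_14_general n k Ξ S' huniv p grp hmono hgrp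
end

section
/- Let R be a finite set of intervals and let UB_min(R) be the minimum over all pairs {I, J} of distinct intervals of R of the maximum distance between a point of I and a point of J. If an interval I ∈ R is at distance greater than UB_min(R) from every other interval of R, then for every realization P of R, the point chosen in I is not an endpoint of a smallest gap of P (i.e., the pair of consecutive points realizing the minimum gap does not include the point of I), provided |R| ≥ 3. -/
/-! The pair `{i, j}` attaining `U` has its two points at distance at most `U` in every
realization, so neither of them can be the isolated interval `i₀`, and every pair
involving `i₀` is strictly longer than `U`. -/

theorem abs_sub_le_max_of_mem_Icc {α : Type*} [AddCommGroup α] [LinearOrder α]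
    [IsOrderedAddMonoid α] {a b c d x y : α} (hx : x ∈ Set.Icc a b) (hy : y ∈ Set.Icc c d) :
    |x - y| ≤ max (d - a) (b - c) :=
  abs_sub_le_iff.2 ⟨le_max_of_le_right (sub_le_sub hx.2 hy.1),
    le_max_of_le_left (sub_le_sub hy.2 hx.1)⟩

theorem stmt_16_general (n : ℕ) (a b : Fin n → ℝ)
    (U : ℝ)
    (hU : IsLeast {d : ℝ | ∃ i j : Fin n, i ≠ j ∧
      d = max (b j - a i) (b i - a j)} U)
    (i₀ : Fin n)
    (hfar : ∀ j : Fin n, j ≠ i₀ → ∀ x ∈ Set.Icc (a i₀) (b i₀),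
      ∀ y ∈ Set.Icc (a j) (b j), U < |x - y|)
    (p : Fin n → ℝ) (hp : ∀ i, p i ∈ Set.Icc (a i) (b i)) :
    ∃ l m : Fin n, l ≠ m ∧ l ≠ i₀ ∧ m ≠ i₀ ∧
      ∀ j : Fin n, j ≠ i₀ → |p l - p m| < |p i₀ - p j| := by
  obtain ⟨⟨i, j, hij, rfl⟩, -⟩ := hU
  have hclose : |p i - p j| ≤ max (b j - a i) (b i - a j) :=
    abs_sub_le_max_of_mem_Icc (hp i) (hp j)
  have hi : i ≠ i₀ := by
    rintro rfl
    exact (hfar j hij.symm _ (hp i) _ (hp j)).not_ge hclose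
  have hj : j ≠ i₀ := by
    rintro rfl
    exact (hfar i hij _ (hp j) _ (hp i)).not_ge (abs_sub_comm (p i) (p j) ▸ hclose)
  exact ⟨i, j, hij, hi, hj, fun k hk => hclose.trans_lt (hfar k hk _ (hp i₀) _ (hp k))⟩

/-- Smallest-gap pruning.  Let `R` be a family of `n ≥ 3` closed intervals
`[a i, b i]`, and let `U = UB_min(R)` be the minimum over all pairs of distinct
intervals of the maximum distance between a point of one and a point of the
other (for `[a i, b i]` and `[a j, b j]` this maximum distance is
`max (b j - a i) (b i - a j)`).  If an interval `I_{i₀}` is at distance greater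
than `U` from every other interval (every point of `I_{i₀}` is at distance
`> U` from every point of every other interval), then for every realization
`p` of `R`, the point `p i₀` is not an endpoint of a smallest gap: some pair of
points not involving `i₀` is strictly closer than every pair involving
`i₀`. -/
theorem stmt_16 (n : ℕ) (hn : 3 ≤ n) (a b : Fin n → ℝ) (hab : ∀ i, a i ≤ b i)
    (U : ℝ)
    (hU : IsLeast {d : ℝ | ∃ i j : Fin n, i ≠ j ∧
      d = max (b j - a i) (b i - a j)} U)
    (i₀ : Fin n)
    (hfar : ∀ j : Fin n, j ≠ i₀ → ∀ x ∈ Set.Icc (a i₀) (b i₀),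
      ∀ y ∈ Set.Icc (a j) (b j), U < |x - y|)
    (p : Fin n → ℝ) (hp : ∀ i, p i ∈ Set.Icc (a i) (b i)) :
    ∃ l m : Fin n, l ≠ m ∧ l ≠ i₀ ∧ m ≠ i₀ ∧
      ∀ j : Fin n, j ≠ i₀ → |p l - p m| < |p i₀ - p j| :=
  stmt_16_general n a b U hU i₀ hfar p hp
end
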